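/- arXiv:1507.01934 — 3 statements merged into one kernel-verified Lean document; each statement's English description precedes it below -/
import Mathlib

section
/- Let G be a digraph and S, T disjoint vertex sets. Suppose G has a gapless S–T separation chain of order at most k and that |V(G) ∖ (S ∪ T)| ≥ k + 2. Then there exist a gapless S–T chain ((A_0,B_0),…,(A_r,B_r)) of order at most k and distinct vertices u ∈ V(G) ∖ (S ∪ N⁻[T]) and v ∈ V(G) ∖ (T ∪ N⁺[S]) such that: (1) ((A_1,B_1),…,(A_r,B_r)) is an (S ∪ {u})–T chain, (2) ((A_0,B_0),…,(A_{r−1},B_{r−1})) is an S–(T ∪ {v}) chain, and (3) ((A_1,B_1),…,(A_{r−1},B_{r−1})) is an (S ∪ {u})–(T ∪ {v}) chain. -/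
namespace AlmostSemicomplete

variable {V : Type} [Fintype V] [DecidableEq V]

/-- The closed out-neighborhood `N⁺[U]`. -/
def closedOut (E : V → V → Prop) [DecidableRel E] (U : Finset V) : Finset V :=
  U.biUnion fun u => insert u (Finset.univ.filter fun w => E u w)

/-- The closed in-neighborhood `N⁻[U]`. -/
def closedIn (E : V → V → Prop) [DecidableRel E] (U : Finset V) : Finset V :=
  U.biUnion fun u => insert u (Finset.univ.filter fun w => E w u)

/-- The open out-neighborhood `N⁺(U)`. -/
def openOut (E : V → V → Prop) [DecidableRel E] (U : Finset V) : Finset V :=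
  closedOut E U \ U

/-- The open in-neighborhood `N⁻(U)`. -/
def openIn (E : V → V → Prop) [DecidableRel E] (U : Finset V) : Finset V :=
  closedIn E U \ U

/-- `d⁺(U)`, the number of out-neighbors of the set `U`. -/
def dOut (E : V → V → Prop) [DecidableRel E] (U : Finset V) : ℕ := (openOut E U).card

/-- `d⁻(U)`, the number of in-neighbors of the set `U`. -/
def dIn (E : V → V → Prop) [DecidableRel E] (U : Finset V) : ℕ := (openIn E U).card

/-- Out-neighbors of a vertex. -/
def NoutV (E : V → V → Prop) [DecidableRel E] (v : V) : Finset V :=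
  Finset.univ.filter fun w => E v w

/-- In-neighbors of a vertex. -/
def NinV (E : V → V → Prop) [DecidableRel E] (v : V) : Finset V :=
  Finset.univ.filter fun w => E w v

/-- Out-degree of a vertex. -/
def dOutV (E : V → V → Prop) [DecidableRel E] (v : V) : ℕ := (NoutV E v).card

/-- In-degree of a vertex. -/
def dInV (E : V → V → Prop) [DecidableRel E] (v : V) : ℕ := (NinV E v).card

/-- A separation of a digraph: `A ∪ B = V` and no edge from `A ∖ B` to `B ∖ A`. -/
def IsSep (E : V → V → Prop) (A B : Finset V) : Prop :=
  A ∪ B = Finset.univ ∧ ∀ a ∈ A, a ∉ B → ∀ b ∈ B, b ∉ A → ¬ E a b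

/-- An `S`–`T` separation. -/
def IsSTSep (E : V → V → Prop) (S T A B : Finset V) : Prop :=
  IsSep E A B ∧ S ∩ B = ∅ ∧ T ∩ A = ∅

/-- A minimum `S`–`T` separation, i.e. one of smallest order `|A ∩ B|`. -/
def IsMinSTSep (E : V → V → Prop) (S T X Y : Finset V) : Prop :=
  IsSTSep E S T X Y ∧ ∀ A B : Finset V, IsSTSep E S T A B → (X ∩ Y).card ≤ (A ∩ B).card

/-- A separation chain: a list of separations with the first components nondecreasing
and the second components nonincreasing. -/
def IsSepChain (E : V → V → Prop) (C : List (Finset V × Finset V)) : Prop :=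
  (∀ p ∈ C, IsSep E p.1 p.2) ∧ List.Chain' (fun p q => p.1 ⊆ q.1 ∧ q.2 ⊆ p.2) C

/-- A separation chain is gapless if consecutive separations differ by at most one vertex
on at least one side. -/
def Gapless (C : List (Finset V × Finset V)) : Prop :=
  List.Chain' (fun p q => (q.1 \ p.1).card ≤ 1 ∨ (p.2 \ q.2).card ≤ 1) C

/-- A separation chain is nice if consecutive separations differ by at most one vertex
on both sides. -/
def Nice (C : List (Finset V × Finset V)) : Prop :=
  List.Chain' (fun p q => (q.1 \ p.1).card ≤ 1 ∧ (p.2 \ q.2).card ≤ 1) C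

/-- An `S`–`T` chain: a separation chain whose first separation has second component
`V ∖ S` and whose last separation has first component `V ∖ T`. -/
def IsSTChain (E : V → V → Prop) (S T : Finset V) (C : List (Finset V × Finset V)) : Prop :=
  IsSepChain E C ∧ C.head?.map Prod.snd = some (Finset.univ \ S) ∧
    C.getLast?.map Prod.fst = some (Finset.univ \ T)

/-- An `S`–`T` chain is tight if `A_0 = N⁺[S]` and `B_r = N⁻[T]`. -/
def Tight (E : V → V → Prop) [DecidableRel E] (S T : Finset V)
    (C : List (Finset V × Finset V)) : Prop :=
  C.head?.map Prod.fst = some (closedOut E S) ∧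
    C.getLast?.map Prod.snd = some (closedIn E T)

/-- The order of a separation chain: the maximum order of its member separations. -/
def chainOrder (C : List (Finset V × Finset V)) : ℕ :=
  (C.map fun p => (p.1 ∩ p.2).card).foldr max 0

/-- The chain has order at most `k`. -/
def orderLE (C : List (Finset V × Finset V)) (k : ℕ) : Prop :=
  ∀ p ∈ C, (p.1 ∩ p.2).card ≤ k

/-- A path decomposition of a digraph. -/
def IsPathDecomp {m : ℕ} (E : V → V → Prop) (X : Fin m → Finset V) : Prop :=
  (∀ v : V, ∃ i, v ∈ X i) ∧
  (∀ u v : V, E u v → ∃ i j : Fin m, j ≤ i ∧ u ∈ X i ∧ v ∈ X j) ∧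
  (∀ (v : V) (i j k : Fin m), i ≤ j → j ≤ k → v ∈ X i → v ∈ X k → v ∈ X j)

/-- The width of a path decomposition: maximum bag size minus one. -/
def pdWidth {m : ℕ} (X : Fin m → Finset V) : ℕ :=
  (Finset.univ.sup fun i => (X i).card) - 1

/-- The pathwidth of a digraph. -/
noncomputable def pathwidth (E : V → V → Prop) : ℕ :=
  sInf {k | ∃ (m : ℕ) (X : Fin m → Finset V), IsPathDecomp E X ∧ pdWidth X = k}

/-- An `h`-semicomplete digraph: every vertex has at most `h` non-neighbors. -/
def HSemicomplete (E : V → V → Prop) [DecidableRel E] (h : ℕ) : Prop :=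
  ∀ v : V, (Finset.univ.filter fun u => u ≠ v ∧ ¬ E u v ∧ ¬ E v u).card ≤ h

/-- A semicomplete digraph: between any two distinct vertices there is an edge in
at least one direction. -/
def Semicomplete (E : V → V → Prop) : Prop := ∀ u v : V, u ≠ v → E u v ∨ E v u

/-- A `k`-admissible pair `(S, T)`. -/
def kAdmissible (E : V → V → Prop) [DecidableRel E] (k : ℕ) (S T : Finset V) : Prop :=
  closedOut E S ∩ T = ∅ ∧ dOut E S ≤ k ∧ dIn E T ≤ k

/-- The potential `μ(S,T) = 2|V ∖ (N⁺[S] ∪ N⁻[T])| + |N⁺(S) Δ N⁻(T)|`. -/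
def mu (E : V → V → Prop) [DecidableRel E] (S T : Finset V) : ℕ :=
  2 * (Finset.univ \ (closedOut E S ∪ closedIn E T)).card +
    (symmDiff (openOut E S) (openIn E T)).card

/-- The wildness of a vertex. -/
def wld (E : V → V → Prop) [DecidableRel E] (v : V) : ℕ :=
  ((Finset.univ.filter fun u => dOutV E u ≤ dOutV E v) \ NoutV E v).card

/-- A `(d, l, k)`-degree tangle. -/
def IsDegTangle (E : V → V → Prop) [DecidableRel E] (d l k : ℕ) (T : Finset V) : Prop :=
  T.card = l ∧ ∀ v ∈ T, d ≤ dOutV E v ∧ dOutV E v ≤ d + k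

/-- A `(d, l, k)`-matching tangle. -/
def IsMatchTangle (E : V → V → Prop) [DecidableRel E] (d l k : ℕ)
    (T₁ T₂ : Finset V) : Prop :=
  T₁.card = l ∧ T₂.card = l ∧ (∀ v ∈ T₁, dOutV E v ≤ d) ∧
    (∀ v ∈ T₂, d + k + 1 ≤ dOutV E v) ∧
    ∃ φ : V → V, Set.BijOn φ ↑T₁ ↑T₂ ∧ ∀ v ∈ T₁, E v (φ v)

/-- A `(d, l, w)`-spider. -/
def IsSpider (E : V → V → Prop) [DecidableRel E] (d l w : ℕ) (T : Finset V)
    (L R : V → Finset V) : Prop :=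
  l ≤ T.card ∧ ∀ v ∈ T,
    L v ⊆ NinV E v ∧ 3 * l ≤ (L v).card ∧ (∀ u ∈ L v, dOutV E u ≤ d) ∧
    R v ⊆ NoutV E v ∧ 3 * l ≤ (R v).card ∧ (∀ u ∈ R v, d + w ≤ dOutV E u)

/-- Tameness of a left-side vertex of a `(d,l,w)`-spider:
`wld(u) ≤ 3l + d + w − d⁺(u) + 2·pw(G)`, stated additively. -/
def LeftTame (E : V → V → Prop) [DecidableRel E] (d l w : ℕ) (u : V) : Prop :=
  wld E u + dOutV E u ≤ 3 * l + d + w + 2 * pathwidth E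

/-- Tameness of a right-side vertex of a `(d,l,w)`-spider:
`wld(u) ≤ 3l + d⁺(u) − d + 2·pw(G)`, stated additively. -/
def RightTame (E : V → V → Prop) [DecidableRel E] (d l w : ℕ) (u : V) : Prop :=
  wld E u + d ≤ 3 * l + dOutV E u + 2 * pathwidth E

/-- A tame `(d, l, w)`-spider: each `L_v` and each `R_v` contains at least `2l`
tame vertices. -/
def IsTameSpider (E : V → V → Prop) [DecidableRel E] (d l w : ℕ) (T : Finset V)
    (L R : V → Finset V) : Prop :=
  IsSpider E d l w T L R ∧ ∀ v ∈ T,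
    (∃ L' ⊆ L v, 2 * l ≤ L'.card ∧ ∀ u ∈ L', LeftTame E d l w u) ∧
    (∃ R' ⊆ R v, 2 * l ≤ R'.card ∧ ∀ u ∈ R', RightTame E d l w u)


/-! Take a shortest gapless `S`–`T` chain of order at most `k`. Its second separation
`(A₁, B₁)` has `B₁ ⊊ V ∖ S` and its penultimate one has `A_{r-1} ⊊ V ∖ T`, for otherwise
dropping the first or the last separation would give a shorter such chain. It has at least
three members, since in a chain with one or two members the pair `(V ∖ T, V ∖ S)` would have
order at most `k + 1`.

For consecutive separations `(A, B)`, `(A', B')` of a gapless chain of order at most `k`, the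
cross pair `(A', B)` has order at most `k + 1`. Deleting from `B` a vertex `u ∈ B ∖ B'` (which
lies in `A'`), or from `A'` a vertex `v ∈ A' ∖ A` (which lies in `B`), gives a separation of
order at most `k` that fits between the two. Inserting `(A₁, B₀ - u)` after the
first and `(A_r - v, B_{r-1})` before the last separation of the shortest chain gives the
required chain. -/

theorem _root_.List.IsChain.insert_between {α : Type*} {R : α → α → Prop} {L M : List α}
    {a b y : α} (h : List.IsChain R (L ++ a :: b :: M)) (hay : R a y) (hyb : R y b) :
    List.IsChain R (L ++ a :: y :: b :: M) := by
  rw [List.isChain_append_cons_cons] at h ⊢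
  exact ⟨h.1, hay, List.isChain_cons_cons.mpr ⟨hyb, h.2.2⟩⟩

theorem _root_.List.mem_or_eq_of_mem_insert_between {α : Type*} {L M : List α} {a b y p : α}
    (hp : p ∈ L ++ a :: y :: b :: M) : p = y ∨ p ∈ L ++ a :: b :: M := by
  simp only [List.mem_append, List.mem_cons] at hp ⊢
  tauto

theorem _root_.List.exists_eq_append_pair {α : Type*} {l : List α} (h : 2 ≤ l.length) :
    ∃ N c d, l = N ++ [c, d] := by
  induction l with
  | nil => simp at h
  | cons x l ih =>
    rcases l with _ | ⟨y, _ | ⟨z, l⟩⟩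
    · simp at h
    · exact ⟨[], x, y, rfl⟩
    · obtain ⟨N, c, d, hN⟩ := ih (by simp)
      exact ⟨x :: N, c, d, by rw [hN, List.cons_append]⟩

theorem card_inter_le_succ_of_gap {α : Type*} [DecidableEq α] {A B A' B' : Finset α} {k : ℕ}
    (h : (A ∩ B).card ≤ k) (h' : (A' ∩ B').card ≤ k)
    (hgap : (A' \ A).card ≤ 1 ∨ (B \ B').card ≤ 1) : (A' ∩ B).card ≤ k + 1 := by
  rcases hgap with hgap | hgap
  · have hsub : A' ∩ B ⊆ A ∩ B ∪ A' \ A := fun x => by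
      simp only [Finset.mem_inter, Finset.mem_union, Finset.mem_sdiff]; tauto
    calc (A' ∩ B).card ≤ (A ∩ B ∪ A' \ A).card := Finset.card_le_card hsub
      _ ≤ (A ∩ B).card + (A' \ A).card := Finset.card_union_le _ _
      _ ≤ k + 1 := add_le_add h hgap
  · have hsub : A' ∩ B ⊆ A' ∩ B' ∪ B \ B' := fun x => by
      simp only [Finset.mem_inter, Finset.mem_union, Finset.mem_sdiff]; tauto
    calc (A' ∩ B).card ≤ (A' ∩ B' ∪ B \ B').card := Finset.card_le_card hsub
      _ ≤ (A' ∩ B').card + (B \ B').card := Finset.card_union_le _ _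
      _ ≤ k + 1 := add_le_add h' hgap

section GaplessOrder

variable {α : Type} [DecidableEq α] {k : ℕ} {C L M : List (Finset α × Finset α)}
  {a b y : Finset α × Finset α}

theorem Gapless.tail (h : Gapless C) : Gapless C.tail := List.IsChain.tail h

theorem Gapless.dropLast (h : Gapless C) : Gapless C.dropLast := List.IsChain.dropLast h

theorem Gapless.insert_between (h : Gapless (L ++ a :: b :: M))
    (hay : (y.1 \ a.1).card ≤ 1 ∨ (a.2 \ y.2).card ≤ 1)
    (hyb : (b.1 \ y.1).card ≤ 1 ∨ (y.2 \ b.2).card ≤ 1) :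
    Gapless (L ++ a :: y :: b :: M) :=
  List.IsChain.insert_between h hay hyb

theorem orderLE.of_subset {C' : List (Finset α × Finset α)} (h : orderLE C k) (hC : C' ⊆ C) :
    orderLE C' k :=
  fun p hp => h p (hC hp)

theorem orderLE.insert_between (h : orderLE (L ++ a :: b :: M) k) (hy : (y.1 ∩ y.2).card ≤ k) :
    orderLE (L ++ a :: y :: b :: M) k := fun p hp => by
  rcases List.mem_or_eq_of_mem_insert_between hp with rfl | hp
  exacts [hy, h p hp]

end GaplessOrder

section Separation

open Finset

variable {E : V → V → Prop} {S T A B A' B' : Finset V} {x : V}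

theorem IsSep.mem_left_of_notMem_right (h : IsSep E A B) (hx : x ∉ B) : x ∈ A :=
  (mem_union.mp (h.1 ▸ mem_univ x)).resolve_right hx

theorem IsSep.mem_right_of_notMem_left (h : IsSep E A B) (hx : x ∉ A) : x ∈ B :=
  (mem_union.mp (h.1 ▸ mem_univ x)).resolve_left hx

theorem IsSep.mono_left (h : IsSep E A B) (hA : A ⊆ A') : IsSep E A' B :=
  ⟨eq_univ_of_forall fun x => mem_union.mpr ((mem_union.mp (h.1 ▸ mem_univ x)).imp_left (@hA x)),
    fun a _ haB b hb hbA' =>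
      h.2 a (h.mem_left_of_notMem_right haB) haB b hb fun hbA => hbA' (hA hbA)⟩

theorem IsSep.mono_right (h : IsSep E A B) (hB : B ⊆ B') : IsSep E A B' :=
  ⟨eq_univ_of_forall fun x => mem_union.mpr ((mem_union.mp (h.1 ▸ mem_univ x)).imp_right (@hB x)),
    fun a ha haB' b _ hbA =>
      h.2 a ha (fun haB => haB' (hB haB)) b (h.mem_right_of_notMem_left hbA) hbA⟩

theorem IsSTSep.notMem_right (h : IsSTSep E S T A B) (hx : x ∈ S) : x ∉ B := fun hxB =>
  eq_empty_iff_forall_notMem.mp h.2.1 x (mem_inter.mpr ⟨hx, hxB⟩)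

theorem IsSTSep.notMem_left (h : IsSTSep E S T A B) (hx : x ∈ T) : x ∉ A := fun hxA =>
  eq_empty_iff_forall_notMem.mp h.2.2 x (mem_inter.mpr ⟨hx, hxA⟩)

variable [DecidableRel E]

theorem mem_closedIn : x ∈ closedIn E T ↔ ∃ t ∈ T, x = t ∨ E x t := by
  simp [closedIn]

theorem mem_closedOut : x ∈ closedOut E S ↔ ∃ s ∈ S, x = s ∨ E s x := by
  simp [closedOut]

theorem IsSTSep.disjoint_closedIn (h : IsSTSep E S T A B) : Disjoint S (closedIn E T) := by
  refine disjoint_left.mpr fun x hxS hxT => ?_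
  have hxB := h.notMem_right hxS
  obtain ⟨t, htT, rfl | hxt⟩ := mem_closedIn.mp hxT
  · exact h.notMem_left htT (h.1.mem_left_of_notMem_right hxB)
  · have htA := h.notMem_left htT
    exact h.1.2 x (h.1.mem_left_of_notMem_right hxB) hxB t (h.1.mem_right_of_notMem_left htA)
      htA hxt

theorem IsSTSep.disjoint_closedOut (h : IsSTSep E S T A B) : Disjoint (closedOut E S) T := by
  refine disjoint_right.mpr fun x hxT hxS => ?_
  have hxA := h.notMem_left hxT
  obtain ⟨s, hsS, rfl | hsx⟩ := mem_closedOut.mp hxS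
  · exact h.notMem_right hsS (h.1.mem_right_of_notMem_left hxA)
  · have hsB := h.notMem_right hsS
    exact h.1.2 s (h.1.mem_left_of_notMem_right hsB) hsB x (h.1.mem_right_of_notMem_left hxA)
      hxA hsx

end Separation

section Chain

open Finset

variable {E : V → V → Prop} {S T S' T' : Finset V} {k : ℕ}
  {C L M : List (Finset V × Finset V)} {a b y p : Finset V × Finset V}

theorem IsSepChain.tail (h : IsSepChain E C) : IsSepChain E C.tail :=
  ⟨fun p hp => h.1 p (List.mem_of_mem_tail hp), List.IsChain.tail h.2⟩

theorem IsSepChain.dropLast (h : IsSepChain E C) : IsSepChain E C.dropLast :=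
  ⟨fun p hp => h.1 p (List.mem_of_mem_dropLast hp), List.IsChain.dropLast h.2⟩

theorem IsSepChain.of_append_cons_cons (h : IsSepChain E (L ++ a :: b :: M)) :
    IsSep E a.1 a.2 ∧ IsSep E b.1 b.2 ∧ a.1 ⊆ b.1 ∧ b.2 ⊆ a.2 :=
  ⟨h.1 a (by simp), h.1 b (by simp), (List.isChain_append_cons_cons.mp h.2).2.1⟩

theorem IsSTChain.isSTSep (h : IsSTChain E S T C) (hp : p ∈ C) : IsSTSep E S T p.1 p.2 := by
  obtain ⟨⟨hsep, hchain⟩, hhead, hlast⟩ := h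
  have hB : p.2 ⊆ univ \ S := List.IsChain.induction (fun q => q.2 ⊆ univ \ S) C hchain
    (fun _ _ hxy hx => hxy.2.trans hx)
    (fun hne => by rw [List.head?_eq_some_head hne] at hhead; simp_all) p hp
  have hA : p.1 ⊆ univ \ T := List.IsChain.backwards_induction (fun q => q.1 ⊆ univ \ T) C hchain
    (fun _ _ hxy hy => hxy.1.trans hy)
    (fun hne => by rw [List.getLast?_eq_some_getLast hne] at hlast; simp_all) p hp
  exact ⟨hsep p hp, disjoint_iff_inter_eq_empty.mp (disjoint_of_subset_right hB disjoint_sdiff),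
    disjoint_iff_inter_eq_empty.mp (disjoint_of_subset_right hA disjoint_sdiff)⟩

theorem IsSTChain.disjoint_closedIn [DecidableRel E] (h : IsSTChain E S T C) :
    Disjoint S (closedIn E T) := by
  obtain ⟨p, hp, -⟩ := Option.map_eq_some_iff.mp h.2.1
  exact (h.isSTSep (List.mem_of_mem_head? hp)).disjoint_closedIn

theorem IsSTChain.disjoint_closedOut [DecidableRel E] (h : IsSTChain E S T C) :
    Disjoint (closedOut E S) T := by
  obtain ⟨p, hp, -⟩ := Option.map_eq_some_iff.mp h.2.1
  exact (h.isSTSep (List.mem_of_mem_head? hp)).disjoint_closedOut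

theorem IsSTChain.tail (h : IsSTChain E S T C)
    (hS : C.tail.head?.map Prod.snd = some (univ \ S')) : IsSTChain E S' T C.tail := by
  have hlen : C.length ≠ 1 := fun h1 => by
    obtain ⟨a, rfl⟩ := List.length_eq_one_iff.mp h1
    simp at hS
  exact ⟨h.1.tail, hS, by rw [List.getLast?_tail, if_neg hlen]; exact h.2.2⟩

theorem IsSTChain.dropLast (h : IsSTChain E S T C)
    (hT : C.dropLast.getLast?.map Prod.fst = some (univ \ T')) :
    IsSTChain E S T' C.dropLast := by
  have hlen : 1 < C.length := by
    by_contra h1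
    rw [List.getLast?_dropLast, if_pos (by omega)] at hT
    simp at hT
  exact ⟨h.1.dropLast, by rw [List.head?_dropLast, if_pos hlen]; exact h.2.1, hT⟩

theorem IsSTChain.insert_between (h : IsSTChain E S T (L ++ a :: b :: M))
    (hy : IsSep E y.1 y.2) (hay : a.1 ⊆ y.1 ∧ y.2 ⊆ a.2) (hyb : y.1 ⊆ b.1 ∧ b.2 ⊆ y.2) :
    IsSTChain E S T (L ++ a :: y :: b :: M) := by
  obtain ⟨⟨hsep, hchain⟩, hhead, hlast⟩ := h
  refine ⟨⟨fun p hp => ?_, hchain.insert_between hay hyb⟩, by simpa using hhead,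
    by simpa using hlast⟩
  rcases List.mem_or_eq_of_mem_insert_between hp with rfl | hp
  exacts [hy, hsep p hp]

end Chain

section Branching

open Finset

variable {E : V → V → Prop} {S T : Finset V} {k : ℕ}
  {C L M : List (Finset V × Finset V)} {a b : Finset V × Finset V}

theorem insert_erase_fst_between (hC : IsSTChain E S T (L ++ a :: b :: M))
    (hg : Gapless (L ++ a :: b :: M)) (ho : orderLE (L ++ a :: b :: M) k) {v : V}
    (hv : v ∈ b.1 \ a.1) :
    IsSTChain E S T (L ++ a :: (b.1.erase v, a.2) :: b :: M) ∧
      Gapless (L ++ a :: (b.1.erase v, a.2) :: b :: M) ∧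
      orderLE (L ++ a :: (b.1.erase v, a.2) :: b :: M) k := by
  obtain ⟨hvb, hva⟩ := mem_sdiff.mp hv
  obtain ⟨hsa, -, hab₁, hab₂⟩ := hC.1.of_append_cons_cons
  have hsub : a.1 ⊆ b.1.erase v := fun x hx => mem_erase.mpr ⟨fun h => hva (h ▸ hx), hab₁ hx⟩
  have hcross := card_inter_le_succ_of_gap (ho a (by simp)) (ho b (by simp))
    (List.isChain_append_cons_cons.mp hg).2.1
  refine ⟨hC.insert_between (hsa.mono_left hsub) ⟨hsub, subset_rfl⟩ ⟨erase_subset _ _, hab₂⟩,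
    hg.insert_between (Or.inr (by simp)) (Or.inl (by simp [sdiff_erase_self hvb])),
    ho.insert_between ?_⟩
  rw [erase_inter, card_erase_of_mem (mem_inter.mpr ⟨hvb, hsa.mem_right_of_notMem_left hva⟩)]
  omega

theorem insert_erase_snd_between (hC : IsSTChain E S T (L ++ a :: b :: M))
    (hg : Gapless (L ++ a :: b :: M)) (ho : orderLE (L ++ a :: b :: M) k) {u : V}
    (hu : u ∈ a.2 \ b.2) :
    IsSTChain E S T (L ++ a :: (b.1, a.2.erase u) :: b :: M) ∧
      Gapless (L ++ a :: (b.1, a.2.erase u) :: b :: M) ∧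
      orderLE (L ++ a :: (b.1, a.2.erase u) :: b :: M) k := by
  obtain ⟨hua, hub⟩ := mem_sdiff.mp hu
  obtain ⟨-, hsb, hab₁, hab₂⟩ := hC.1.of_append_cons_cons
  have hsub : b.2 ⊆ a.2.erase u := fun x hx => mem_erase.mpr ⟨fun h => hub (h ▸ hx), hab₂ hx⟩
  have hcross := card_inter_le_succ_of_gap (ho a (by simp)) (ho b (by simp))
    (List.isChain_append_cons_cons.mp hg).2.1
  refine ⟨hC.insert_between (hsb.mono_right hsub) ⟨hab₁, erase_subset _ _⟩ ⟨subset_rfl, hsub⟩,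
    hg.insert_between (Or.inr (by simp [sdiff_erase_self hua])) (Or.inl (by simp)),
    ho.insert_between ?_⟩
  rw [inter_erase, card_erase_of_mem (mem_inter.mpr ⟨hsb.mem_left_of_notMem_right hub, hua⟩)]
  omega

theorem IsSTChain.three_le_length (hC : IsSTChain E S T C) (hg : Gapless C) (ho : orderLE C k)
    (hbig : k + 2 ≤ (univ \ (S ∪ T)).card) : 3 ≤ C.length := by
  have hST : (univ \ T) ∩ (univ \ S) = univ \ (S ∪ T) := by ext; simp; tauto
  obtain ⟨-, hhead, hlast⟩ := hC
  rcases C with _ | ⟨a, _ | ⟨b, _ | ⟨c, C⟩⟩⟩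
  · simp at hhead
  · simp only [List.head?_cons, List.getLast?_singleton, Option.map_some, Option.some_inj]
      at hhead hlast
    have := ho a (by simp)
    rw [hhead, hlast, hST] at this
    omega
  · simp only [List.head?_cons, List.getLast?_cons_cons, List.getLast?_singleton,
      Option.map_some, Option.some_inj] at hhead hlast
    have hab := List.isChain_pair.mp hg
    have := card_inter_le_succ_of_gap (ho a (by simp)) (ho b (by simp)) hab
    rw [hhead, hlast, hST] at this
    omega
  · simp

theorem exists_chain_strict_ends (h : ∃ C, IsSTChain E S T C ∧ Gapless C ∧ orderLE C k)
    (hbig : k + 2 ≤ (univ \ (S ∪ T)).card) :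
    ∃ a b c d M N, IsSTChain E S T (a :: b :: M) ∧ Gapless (a :: b :: M) ∧
      orderLE (a :: b :: M) k ∧ b :: M = N ++ [c, d] ∧
      (a.2 \ b.2).Nonempty ∧ (d.1 \ c.1).Nonempty := by
  obtain ⟨C, ⟨hC, hg, ho⟩, hmin⟩ := (measure List.length).wf.has_min _ h
  have hlen := hC.three_le_length hg ho hbig
  have htail : ¬ IsSTChain E S T C.tail := fun h' =>
    hmin C.tail ⟨h', hg.tail, ho.of_subset (List.tail_subset C)⟩
      (show C.tail.length < C.length by simp; omega)
  have hdrop : ¬ IsSTChain E S T C.dropLast := fun h' =>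
    hmin C.dropLast ⟨h', hg.dropLast, ho.of_subset (List.dropLast_subset C)⟩
      (show C.dropLast.length < C.length by simp; omega)
  obtain ⟨a, b, M, rfl⟩ : ∃ a b M, C = a :: b :: M := by
    match C, hlen with | a :: b :: M, _ => exact ⟨a, b, M, rfl⟩
  obtain ⟨N, c, d, hN⟩ := List.exists_eq_append_pair (l := b :: M) (by simp at hlen ⊢; omega)
  have hC' : IsSTChain E S T ((a :: N) ++ [c, d]) := by rw [List.cons_append, ← hN]; exact hC
  obtain ⟨-, -, -, hab⟩ := hC.1.of_append_cons_cons (L := [])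
  obtain ⟨-, -, hcd, -⟩ := hC'.1.of_append_cons_cons
  refine ⟨a, b, c, d, M, N, hC, hg, ho, hN, sdiff_nonempty.mpr fun hba => htail ?_,
    sdiff_nonempty.mpr fun hdc => hdrop ?_⟩
  · exact hC.tail (by simpa [subset_antisymm hab hba] using hC.2.1)
  · rw [List.cons_append, ← hN] at hC'
    exact hC.dropLast (by simpa [hN, subset_antisymm hcd hdc, List.getLast?_cons,
      List.dropLast_cons_of_ne_nil, List.dropLast_append_of_ne_nil] using hC'.2.2)

end Branching

theorem branching_recurrence_general (E : V → V → Prop) [DecidableRel E]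
    (S T : Finset V) (k : ℕ)
    (h : ∃ C : List (Finset V × Finset V), IsSTChain E S T C ∧ Gapless C ∧ orderLE C k)
    (hbig : k + 2 ≤ (Finset.univ \ (S ∪ T)).card) :
    ∃ (C : List (Finset V × Finset V)) (u v : V),
      IsSTChain E S T C ∧ Gapless C ∧ orderLE C k ∧ u ≠ v ∧
      u ∉ S ∪ closedIn E T ∧ v ∉ T ∪ closedOut E S ∧
      IsSTChain E (insert u S) T C.tail ∧
      IsSTChain E S (insert v T) C.dropLast ∧
      IsSTChain E (insert u S) (insert v T) C.tail.dropLast := by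
  obtain ⟨a, b, c, d, M, N, hC, hg, ho, hN, ⟨u, hu⟩, ⟨v, hv⟩⟩ := exists_chain_strict_ends h hbig
  have ha : a.2 = Finset.univ \ S := by simpa using hC.2.1
  have hd : d.1 = Finset.univ \ T := by simpa [hN, List.getLast?_cons] using hC.2.2
  obtain ⟨hC₁, hg₁, ho₁⟩ := insert_erase_snd_between (L := []) hC hg ho hu
  rw [List.nil_append, hN, ← List.cons_append, ← List.cons_append] at hC₁ hg₁ ho₁
  obtain ⟨hC₂, hg₂, ho₂⟩ := insert_erase_fst_between (M := []) hC₁ hg₁ ho₁ hv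
  have h₁ : IsSTChain E (insert u S) T _ := hC₂.tail (by simp [ha, Finset.sdiff_insert])
  have h₂ : IsSTChain E S (insert v T) _ := hC₂.dropLast (by simp [hd, Finset.sdiff_insert,
    List.getLast?_cons, List.dropLast_cons_of_ne_nil, List.dropLast_append_of_ne_nil])
  have h₃ : IsSTChain E (insert u S) (insert v T) _ := h₁.dropLast (by simp [hd,
    Finset.sdiff_insert, List.getLast?_cons, List.dropLast_cons_of_ne_nil,
    List.dropLast_append_of_ne_nil])
  refine ⟨_, u, v, hC₂, hg₂, ho₂, ?_, ?_, ?_, h₁, h₂, h₃⟩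
  · rintro rfl
    exact Finset.disjoint_left.mp h₃.disjoint_closedIn (Finset.mem_insert_self u S)
      (mem_closedIn.mpr ⟨u, Finset.mem_insert_self u T, Or.inl rfl⟩)
  · refine Finset.notMem_union.mpr ⟨by simpa [ha] using (Finset.mem_sdiff.mp hu).1, ?_⟩
    exact Finset.disjoint_left.mp h₁.disjoint_closedIn (Finset.mem_insert_self u S)
  · refine Finset.notMem_union.mpr ⟨by simpa [hd] using (Finset.mem_sdiff.mp hv).1, ?_⟩
    exact Finset.disjoint_right.mp h₂.disjoint_closedOut (Finset.mem_insert_self v T)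

/-- The branching recurrence: if `G` has a gapless `S`–`T` chain of order at most `k`
and `|V ∖ (S ∪ T)| ≥ k + 2`, then there are such a chain and distinct vertices `u`, `v`
so that dropping the first and/or last separation gives `(S ∪ {u})`–`T`,
`S`–`(T ∪ {v})` and `(S ∪ {u})`–`(T ∪ {v})` chains. -/
theorem branching_recurrence (E : V → V → Prop) [DecidableRel E]
    (hirr : Irreflexive E) (S T : Finset V) (hST : Disjoint S T) (k : ℕ)
    (h : ∃ C : List (Finset V × Finset V), IsSTChain E S T C ∧ Gapless C ∧ orderLE C k)
    (hbig : k + 2 ≤ (Finset.univ \ (S ∪ T)).card) :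
    ∃ (C : List (Finset V × Finset V)) (u v : V),
      IsSTChain E S T C ∧ Gapless C ∧ orderLE C k ∧ u ≠ v ∧
      u ∉ S ∪ closedIn E T ∧ v ∉ T ∪ closedOut E S ∧
      IsSTChain E (insert u S) T C.tail ∧
      IsSTChain E S (insert v T) C.dropLast ∧
      IsSTChain E (insert u S) (insert v T) C.tail.dropLast :=
  branching_recurrence_general E S T k h hbig

end AlmostSemicomplete
end

section
/- Let G be a digraph, S and T disjoint vertex sets, and (X,Y) a minimum S–T separation of G. Then μ(S, Y∖X) + μ(X∖Y, T) = μ(S,T), where μ(S,T) = 2·|V(G) ∖ (N⁺[S] ∪ N⁻[T])| + |N⁺(S) Δ N⁻(T)| and Δ denotes symmetric difference. -/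
namespace AlmostSemicomplete

variable {V : Type} [Fintype V] [DecidableEq V]

/-! Along a minimum `S`–`T` separation `(X, Y)` every vertex of `X ∩ Y` has an
in-neighbour in `X ∖ Y` and an out-neighbour in `Y ∖ X` (otherwise it could be removed from one
side), so `N⁺[X ∖ Y] = X` and `N⁻[Y ∖ X] = Y`. Moreover, whenever `S` and `N⁻[T]` (equivalently
`N⁺[S]` and `T`) are disjoint, inclusion–exclusion gives
`μ(S,T) = 2|V| - |N⁺[S]| - |S| - |N⁻[T]| - |T|`; the theorem is this identity applied to the
three pairs, together with `|X| + |Y ∖ X| = |Y| + |X ∖ Y| = |V|`. -/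

open Finset

theorem mem_closedOut_s7 {E : V → V → Prop} [DecidableRel E] {U : Finset V} {v : V} :
    v ∈ closedOut E U ↔ v ∈ U ∨ ∃ u ∈ U, E u v := by
  simp only [closedOut, mem_biUnion, mem_insert, mem_filter, mem_univ, true_and]
  constructor
  · rintro ⟨u, hu, rfl | h⟩
    exacts [.inl hu, .inr ⟨u, hu, h⟩]
  · rintro (h | ⟨u, hu, h⟩)
    exacts [⟨v, h, .inl rfl⟩, ⟨u, hu, .inr h⟩]

theorem subset_closedOut (E : V → V → Prop) [DecidableRel E] (U : Finset V) :
    U ⊆ closedOut E U :=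
  fun _ hv => mem_closedOut_s7.2 (.inl hv)

-- Reversing every edge turns `closedIn E` into `closedOut (flip E)` definitionally, so the
-- in-neighbourhood statements below are the out-neighbourhood ones for `flip E`.
instance (E : V → V → Prop) [DecidableRel E] : DecidableRel (flip E) :=
  fun a b => ‹DecidableRel E› b a

theorem subset_closedIn (E : V → V → Prop) [DecidableRel E] (U : Finset V) :
    U ⊆ closedIn E U :=
  subset_closedOut (flip E) U

theorem card_symmDiff_add_two_mul_card_inter {α : Type*} [DecidableEq α] (s t : Finset α) :
    #(symmDiff s t) + 2 * #(s ∩ t) = #s + #t := by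
  rw [symmDiff_def, sup_eq_union, card_union_of_disjoint disjoint_sdiff_sdiff]
  have hs := card_sdiff_add_card_inter s t
  have ht := card_sdiff_add_card_inter t s
  rw [inter_comm] at ht
  omega

theorem card_univ_sdiff_add_card (s : Finset V) : #(univ \ s) + #s = Fintype.card V := by
  rw [card_sdiff_add_card_eq_card (subset_univ s), card_univ]

/-- The hypotheses make `N⁺(S) ∩ N⁻(T) = N⁺[S] ∩ N⁻[T]`, which cancels between the two terms
of `μ`. -/
theorem mu_add_card_add_card (E : V → V → Prop) [DecidableRel E] (S T : Finset V)
    (hS : Disjoint S (closedIn E T)) (hT : Disjoint (closedOut E S) T) :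
    mu E S T + #(closedOut E S) + #S + #(closedIn E T) + #T = 2 * Fintype.card V := by
  have hinter : (closedOut E S \ S) ∩ (closedIn E T \ T) = closedOut E S ∩ closedIn E T := by
    ext v
    simp only [mem_inter, mem_sdiff]
    refine ⟨fun h => ⟨h.1.1, h.2.1⟩, fun h => ⟨⟨h.1, ?_⟩, h.2, ?_⟩⟩
    exacts [disjoint_right.1 hS h.2, disjoint_left.1 hT h.1]
  have hsymm := card_symmDiff_add_two_mul_card_inter (closedOut E S \ S) (closedIn E T \ T)
  have hout := card_sdiff_add_card_eq_card (subset_closedOut E S)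
  have hin := card_sdiff_add_card_eq_card (subset_closedIn E T)
  have hcompl := card_univ_sdiff_add_card (closedOut E S ∪ closedIn E T)
  have hunion := card_union_add_card_inter (closedOut E S) (closedIn E T)
  rw [hinter] at hsymm
  unfold mu openOut openIn
  omega

section Separation

variable {E : V → V → Prop} {S T A B X Y : Finset V}

theorem IsSep.flip (h : IsSep E A B) : IsSep (flip E) B A :=
  ⟨union_comm A B ▸ h.1, fun b hb hbA a ha haB => h.2 a ha haB b hb hbA⟩

theorem IsSep.mem_or_mem (h : IsSep E A B) (v : V) : v ∈ A ∨ v ∈ B :=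
  mem_union.1 (h.1 ▸ mem_univ v)

theorem IsSep.card_sdiff_add_card (h : IsSep E A B) : #(A \ B) + #B = Fintype.card V := by
  rw [Finset.card_sdiff_add_card, h.1, card_univ]

theorem IsSep.closedOut_subset [DecidableRel E] (h : IsSep E A B) {U : Finset V}
    (hU : U ⊆ A \ B) : closedOut E U ⊆ A := by
  intro v hv
  rcases mem_closedOut_s7.1 hv with hvU | ⟨u, huU, huv⟩
  · exact (mem_sdiff.1 (hU hvU)).1
  · obtain ⟨huA, huB⟩ := mem_sdiff.1 (hU huU)
    by_contra hvA
    exact h.2 u huA huB v ((h.mem_or_mem v).resolve_left hvA) hvA huv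

theorem IsSep.erase (h : IsSep E A B) {v : V} (hvB : v ∈ B) (hv : ∀ u ∈ A \ B, ¬ E u v) :
    IsSep E (A.erase v) B := by
  refine ⟨eq_univ_of_forall fun w => ?_, fun a ha haB b hbB hb hab => ?_⟩
  · by_cases hw : w = v
    · exact mem_union_right _ (hw ▸ hvB)
    · rcases h.mem_or_mem w with hwA | hwB
      exacts [mem_union_left _ (mem_erase.2 ⟨hw, hwA⟩), mem_union_right _ hwB]
  · have haA := mem_of_mem_erase ha
    by_cases hbA : b ∈ A
    · have hbv : b = v := by_contra fun hbv => hb (mem_erase.2 ⟨hbv, hbA⟩)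
      exact hv a (mem_sdiff.2 ⟨haA, haB⟩) (hbv ▸ hab)
    · exact h.2 a haA haB b hbB hbA hab

theorem IsSTSep.flip (h : IsSTSep E S T A B) : IsSTSep (flip E) T S B A :=
  ⟨h.1.flip, h.2.2, h.2.1⟩

theorem IsSTSep.subset_sdiff (h : IsSTSep E S T A B) : S ⊆ A \ B := by
  intro v hv
  have hvB : v ∉ B := fun hvB => (eq_empty_iff_forall_notMem.1 h.2.1) v (mem_inter.2 ⟨hv, hvB⟩)
  exact mem_sdiff.2 ⟨(h.1.mem_or_mem v).resolve_right hvB, hvB⟩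

theorem IsMinSTSep.flip (h : IsMinSTSep E S T X Y) : IsMinSTSep (flip E) T S Y X :=
  ⟨h.1.flip, fun A B hAB => inter_comm X Y ▸ inter_comm B A ▸ h.2 B A hAB.flip⟩

theorem IsMinSTSep.closedOut_sdiff [DecidableRel E] (h : IsMinSTSep E S T X Y) :
    closedOut E (X \ Y) = X := by
  refine (h.1.1.closedOut_subset Subset.rfl).antisymm fun v hvX => ?_
  by_cases hvY : v ∈ Y
  · by_contra hv
    have hno : ∀ u ∈ X \ Y, ¬ E u v := fun u hu huv => hv (mem_closedOut_s7.2 (.inr ⟨u, hu, huv⟩))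
    have hsep : IsSTSep E S T (X.erase v) Y :=
      ⟨h.1.1.erase hvY hno, h.1.2.1,
        subset_empty.1 (h.1.2.2 ▸ inter_subset_inter_left (erase_subset v X))⟩
    have hle := h.2 _ _ hsep
    rw [erase_inter] at hle
    exact hle.not_gt (card_erase_lt_of_mem (mem_inter.2 ⟨hvX, hvY⟩))
  · exact subset_closedOut E _ (mem_sdiff.2 ⟨hvX, hvY⟩)

theorem IsMinSTSep.closedIn_sdiff [DecidableRel E] (h : IsMinSTSep E S T X Y) :
    closedIn E (Y \ X) = Y :=
  h.flip.closedOut_sdiff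

end Separation

theorem mu_additive_general (E : V → V → Prop) [DecidableRel E]
    (S T : Finset V)
    (X Y : Finset V) (hmin : IsMinSTSep E S T X Y) :
    mu E S (Y \ X) + mu E (X \ Y) T = mu E S T := by
  have hS : S ⊆ X \ Y := hmin.1.subset_sdiff
  have hT : T ⊆ Y \ X := hmin.1.flip.subset_sdiff
  have hA : closedOut E S ⊆ X := hmin.1.1.closedOut_subset hS
  have hB : closedIn E T ⊆ Y := hmin.1.1.flip.closedOut_subset hT
  have hSY : Disjoint S Y := (subset_sdiff.1 hS).2
  have hXT : Disjoint X T := (subset_sdiff.1 hT).2.symm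
  have h₁ := mu_add_card_add_card E S (Y \ X) (by rwa [hmin.closedIn_sdiff])
    (disjoint_of_subset_left hA disjoint_sdiff)
  have h₂ := mu_add_card_add_card E (X \ Y) T
    (disjoint_of_subset_right hB sdiff_disjoint) (by rwa [hmin.closedOut_sdiff])
  have h₀ := mu_add_card_add_card E S T (disjoint_of_subset_right hB hSY)
    (disjoint_of_subset_left hA hXT)
  have hXY := hmin.1.1.card_sdiff_add_card
  have hYX := hmin.1.1.flip.card_sdiff_add_card
  rw [hmin.closedIn_sdiff] at h₁
  rw [hmin.closedOut_sdiff] at h₂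
  omega

/-- `μ` splits additively over a minimum `S`–`T` separation:
`μ(S, Y∖X) + μ(X∖Y, T) = μ(S, T)`. -/
theorem mu_additive (E : V → V → Prop) [DecidableRel E] (hirr : Irreflexive E)
    (S T : Finset V) (hST : Disjoint S T)
    (X Y : Finset V) (hmin : IsMinSTSep E S T X Y) :
    mu E S (Y \ X) + mu E (X \ Y) T = mu E S T :=
  mu_additive_general E S T X Y hmin

end AlmostSemicomplete
end

section
/- If a semicomplete digraph G has an (l,k)-degree tangle, then pw(G) ≥ (l − k − 1)/2. -/
/-!
Fix an optimal path decomposition and let `v` live in the bags indexed by `[f v, g v]`; an edge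
`u → v` forces `f v ≤ g u`. Take `a ∈ T` with `g a` minimal and `b ∈ T` with `f b` maximal. If
`f b ≤ g a`, the whole tangle lies in the bag `X (g a)`. Otherwise `F = {w | f w ≤ g a}` contains
`N⁺[a]`, so `|F| ≥ d + 1`, while by semicompleteness `G = {w | g w < f b}` lies in `N⁺(b)`, so
`|G| ≤ d + k`. As `F ∖ (G ∖ T) ⊆ X (g a)`, `T ∖ G ⊆ X (f b)` and
`|T| + |F| ≤ |F ∖ (G ∖ T)| + |T ∖ G| + |G|`, this gives `l + d + 1 ≤ 2 (pw + 1) + d + k`.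
-/

namespace AlmostSemicomplete

open Finset

section

variable {V : Type} [Fintype V] {E : V → V → Prop} [DecidableRel E]

theorem dOutV_add_one_le_card [DecidableEq V] (hirr : Irreflexive E) {v : V} {S : Finset V}
    (h : insert v (NoutV E v) ⊆ S) : dOutV E v + 1 ≤ #S := by
  have hv : v ∉ NoutV E v := by simp [NoutV, hirr v]
  simpa [dOutV, card_insert_of_notMem hv] using card_le_card h

theorem Semicomplete.subset_NoutV (hsc : Semicomplete E) {v : V} {S : Finset V}
    (hv : v ∉ S) (h : ∀ w ∈ S, ¬ E w v) : S ⊆ NoutV E v := fun w hw => by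
  simpa [NoutV] using (hsc w v (ne_of_mem_of_not_mem hw hv)).resolve_left (h w hw)

end

variable {V : Type}

structure IsIntervalModel {ι : Type*} [LinearOrder ι] (E : V → V → Prop) (X : ι → Finset V)
    (f g : V → ι) : Prop where
  le : ∀ v, f v ≤ g v
  mem : ∀ v i, f v ≤ i → i ≤ g v → v ∈ X i
  edge : ∀ u v, E u v → f v ≤ g u

theorem IsPathDecomp.exists_isIntervalModel [DecidableEq V] {m : ℕ} {E : V → V → Prop}
    {X : Fin m → Finset V} (hX : IsPathDecomp E X) : ∃ f g : V → Fin m, IsIntervalModel E X f g := by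
  obtain ⟨hcov, hedge, hconv⟩ := hX
  have hbags : ∀ v, (univ.filter (v ∈ X ·)).Nonempty := fun v =>
    (hcov v).imp fun i hi => by simpa using hi
  have hfirst : ∀ v, v ∈ X ((univ.filter (v ∈ X ·)).min' (hbags v)) := fun v => by
    simpa using min'_mem _ (hbags v)
  have hlast : ∀ v, v ∈ X ((univ.filter (v ∈ X ·)).max' (hbags v)) := fun v => by
    simpa using max'_mem _ (hbags v)
  refine ⟨fun v => (univ.filter (v ∈ X ·)).min' (hbags v),
    fun v => (univ.filter (v ∈ X ·)).max' (hbags v), ⟨?_, ?_, ?_⟩⟩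
  · exact fun v => min'_le _ _ (by simpa using hlast v)
  · exact fun v i h₁ h₂ => hconv v _ i _ h₁ h₂ (hfirst v) (hlast v)
  · intro u v huv
    obtain ⟨i, j, hji, hu, hv⟩ := hedge u v huv
    exact (min'_le _ j (by simpa using hv)).trans (hji.trans (le_max' _ i (by simpa using hu)))

theorem IsIntervalModel.add_one_le_two_mul_add [Fintype V] [DecidableEq V] {ι : Type*}
    [LinearOrder ι] {E : V → V → Prop} [DecidableRel E] {X : ι → Finset V} {f g : V → ι} (hM : IsIntervalModel E X f g)
    (hirr : Irreflexive E) (hsc : Semicomplete E) {t : ℕ} (ht : ∀ i, #(X i) ≤ t)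
    {d l k : ℕ} {T : Finset V} (hT : IsDegTangle E d l k T) (hne : T.Nonempty) :
    l + 1 ≤ 2 * t + k := by
  obtain ⟨rfl, hdeg⟩ := hT
  obtain ⟨a, haT, ha⟩ := T.exists_min_image g hne
  obtain ⟨b, hbT, hb⟩ := T.exists_max_image f hne
  rcases le_or_gt (f b) (g a) with hba | hab
  · have hT : T ⊆ X (g a) := fun v hv => hM.mem v _ ((hb v hv).trans hba) (ha v hv)
    have := (card_le_card hT).trans (ht _)
    have := hne.card_pos
    omega
  set F := univ.filter fun w => f w ≤ g a
  set G := univ.filter fun w => g w < f b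
  have hF : d + 1 ≤ #F := (Nat.succ_le_succ (hdeg a haT).1).trans <|
    dOutV_add_one_le_card hirr <| insert_subset (by simpa [F] using hM.le a) fun w hw => by
      simpa [F] using hM.edge a w (by simpa [NoutV] using hw)
  have hG : #G ≤ d + k := by
    refine (card_le_card (hsc.subset_NoutV (by simpa [G] using hM.le b) ?_)).trans (hdeg b hbT).2
    intro w hw hwb
    simp only [G, mem_filter, mem_univ, true_and] at hw
    exact (hM.edge w b hwb).not_gt hw
  have hFbag : F \ (G \ T) ⊆ X (g a) := fun w hw => by
    simp only [F, G, mem_sdiff, mem_filter, mem_univ, true_and, not_and, not_not] at hw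
    refine hM.mem w _ hw.1 ?_
    by_cases hwT : w ∈ T
    · exact ha w hwT
    · exact hab.le.trans (not_lt.mp fun h => hwT (hw.2 h))
  have hTbag : T \ G ⊆ X (f b) := fun w hw => by
    simp only [G, mem_sdiff, mem_filter, mem_univ, true_and, not_lt] at hw
    exact hM.mem w _ (hb w hw.1) hw.2
  have hcover₁ := card_le_card_sdiff_add_card (s := F) (t := G \ T)
  have hcover₂ : #T + #(G \ T) = #(T \ G) + #G := by
    rw [add_comm, card_sdiff_add_card, card_sdiff_add_card, union_comm]
  have := (card_le_card hFbag).trans (ht _)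
  have := (card_le_card hTbag).trans (ht _)
  omega

theorem card_le_pdWidth_add_one {m : ℕ} (X : Fin m → Finset V) (i : Fin m) :
    #(X i) ≤ pdWidth X + 1 := by
  have := le_sup (f := fun i => #(X i)) (mem_univ i)
  unfold pdWidth
  omega

theorem exists_isPathDecomp_pdWidth_eq_pathwidth [Fintype V] (E : V → V → Prop) :
    ∃ (m : ℕ) (X : Fin m → Finset V), IsPathDecomp E X ∧ pdWidth X = pathwidth E :=
  Nat.sInf_mem (s := {k | ∃ (m : ℕ) (X : Fin m → Finset V), IsPathDecomp E X ∧ pdWidth X = k})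
    ⟨_, 1, fun _ => univ,
    ⟨fun v => ⟨0, mem_univ v⟩, fun u v _ => ⟨0, 0, le_rfl, mem_univ u, mem_univ v⟩,
      fun v _ _ _ _ _ _ _ => mem_univ v⟩, rfl⟩

variable [Fintype V] [DecidableEq V]

theorem pathwidth_ge_of_degree_tangle_general (E : V → V → Prop) [DecidableRel E]
    (hirr : Irreflexive E) (hsc : Semicomplete E)
    (d l k : ℕ) (hl : 0 < l)
    (T : Finset V) (hT : IsDegTangle E d l k T) :
    ((l : ℝ) - k - 1) / 2 ≤ (pathwidth E : ℝ) := by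
  obtain ⟨m, X, hX, hwidth⟩ := exists_isPathDecomp_pdWidth_eq_pathwidth E
  obtain ⟨f, g, hM⟩ := hX.exists_isIntervalModel
  have hbound := hM.add_one_le_two_mul_add hirr hsc (card_le_pdWidth_add_one X) hT
    (card_pos.mp (hT.1 ▸ hl))
  rw [hwidth] at hbound
  have : (l : ℝ) + 1 ≤ 2 * ((pathwidth E : ℝ) + 1) + k := by exact_mod_cast hbound
  linarith

/-- If a semicomplete digraph has an `(l,k)`-degree tangle then
`pw(G) ≥ (l − k − 1)/2`. -/
theorem pathwidth_ge_of_degree_tangle (E : V → V → Prop) [DecidableRel E]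
    (hirr : Irreflexive E) (hsc : Semicomplete E)
    (d l k : ℕ) (hl : 0 < l) (hk : 0 < k)
    (T : Finset V) (hT : IsDegTangle E d l k T) :
    ((l : ℝ) - k - 1) / 2 ≤ (pathwidth E : ℝ) :=
  pathwidth_ge_of_degree_tangle_general E hirr hsc d l k hl T hT

end AlmostSemicomplete
end
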